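/- With ξ(t,μ) = t[φ(t−μ) + φ(t+μ)] + Φ̄(t−μ) + Φ(−t−μ), the following bounds hold: ξ(t,μ) ≤ t + 1 for all μ and all t > 0; and if t ≥ e and |μ| ≤ t − √(2 log t), then ξ(t,μ) ≤ 2. -/
import Mathlib

open MeasureTheory Set

/-- Standard Gaussian density. -/
noncomputable def gphi (v : ℝ) : ℝ := (Real.sqrt (2 * Real.pi))⁻¹ * Real.exp (-v ^ 2 / 2)

/-- Standard Gaussian upper tail probability. -/
noncomputable def PhiBar (v : ℝ) : ℝ := ∫ x in Set.Ioi v, gphi x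

/-- Standard Gaussian CDF. -/
noncomputable def Phi (v : ℝ) : ℝ := ∫ x in Set.Iic v, gphi x

noncomputable def xi (t μ : ℝ) : ℝ :=
  t * (gphi (t - μ) + gphi (t + μ)) + PhiBar (t - μ) + Phi (-t - μ)

lemma gphi_nonneg (v : ℝ) : 0 ≤ gphi v := by
  unfold gphi
  positivity

lemma gphi_integrable : Integrable gphi := by
  have h : Integrable (fun x : ℝ => Real.exp (-(1/2 : ℝ) * x ^ 2)) :=
    integrable_exp_neg_mul_sq (by norm_num)
  have : gphi = fun v => (Real.sqrt (2 * Real.pi))⁻¹ * Real.exp (-(1/2 : ℝ) * v ^ 2) := by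
    funext v; unfold gphi; ring_nf
  rw [this]
  exact h.const_mul _

lemma gphi_integral : ∫ x : ℝ, gphi x = 1 := by
  have h : ∫ x : ℝ, Real.exp (-(1/2 : ℝ) * x ^ 2) = Real.sqrt (Real.pi / (1/2)) :=
    integral_gaussian (1/2)
  have heq : ∫ x : ℝ, gphi x
      = (Real.sqrt (2 * Real.pi))⁻¹ * ∫ x : ℝ, Real.exp (-(1/2 : ℝ) * x ^ 2) := by
    rw [← integral_const_mul]
    congr 1; funext v; unfold gphi; ring_nf
  rw [heq, h]
  have : Real.pi / (1/2) = 2 * Real.pi := by ring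
  rw [this]
  rw [inv_mul_cancel₀]
  positivity

lemma Phi_add_PhiBar (v : ℝ) : Phi v + PhiBar v = 1 := by
  unfold Phi PhiBar
  rw [intervalIntegral.integral_Iic_add_Ioi gphi_integrable.integrableOn gphi_integrable.integrableOn,
    gphi_integral]

lemma PhiBar_nonneg (v : ℝ) : 0 ≤ PhiBar v :=
  setIntegral_nonneg measurableSet_Ioi (fun x _ => gphi_nonneg x)

lemma Phi_nonneg (v : ℝ) : 0 ≤ Phi v :=
  setIntegral_nonneg measurableSet_Iic (fun x _ => gphi_nonneg x)

lemma PhiBar_anti {a b : ℝ} (h : a ≤ b) : PhiBar b ≤ PhiBar a := by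
  unfold PhiBar
  apply setIntegral_mono_set gphi_integrable.integrableOn
    (Filter.Eventually.of_forall fun x => gphi_nonneg x)
  exact HasSubset.Subset.eventuallyLE (Ioi_subset_Ioi h)

lemma tails_le_one {a b : ℝ} (h : b ≤ a) : PhiBar a + Phi b ≤ 1 := by
  have h1 := Phi_add_PhiBar b
  have h2 := PhiBar_anti h
  linarith

lemma sqrt_two_pi_ge_two : (2 : ℝ) ≤ Real.sqrt (2 * Real.pi) := by
  have : (4 : ℝ) ≤ 2 * Real.pi := by
    have := Real.pi_gt_three
    linarith
  calc (2:ℝ) = Real.sqrt 4 := by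
        rw [show (4:ℝ) = 2^2 by norm_num, Real.sqrt_sq (by norm_num)]
    _ ≤ Real.sqrt (2 * Real.pi) := Real.sqrt_le_sqrt this

lemma gphi_le (v : ℝ) : gphi v ≤ (Real.sqrt (2 * Real.pi))⁻¹ := by
  unfold gphi
  have h1 : Real.exp (-v ^ 2 / 2) ≤ 1 := by
    rw [show (1:ℝ) = Real.exp 0 by simp]
    apply Real.exp_le_exp.2
    nlinarith [sq_nonneg v]
  nlinarith [inv_nonneg.2 (Real.sqrt_nonneg (2 * Real.pi))]

theorem stmt11 :
    (∀ t μ : ℝ, 0 < t → xi t μ ≤ t + 1) ∧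
    (∀ t μ : ℝ, Real.exp 1 ≤ t → |μ| ≤ t - Real.sqrt (2 * Real.log t) → xi t μ ≤ 2) := by
  constructor
  · intro t μ ht
    unfold xi
    have h1 : gphi (t - μ) ≤ (Real.sqrt (2 * Real.pi))⁻¹ := gphi_le _
    have h2 : gphi (t + μ) ≤ (Real.sqrt (2 * Real.pi))⁻¹ := gphi_le _
    have hs := sqrt_two_pi_ge_two
    have hinv : (Real.sqrt (2 * Real.pi))⁻¹ ≤ 1/2 := by
      rw [inv_le_comm₀ (by linarith) (by norm_num)]
      simpa using hs
    have htail : PhiBar (t - μ) + Phi (-t - μ) ≤ 1 := tails_le_one (by linarith)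
    nlinarith [gphi_nonneg (t - μ), gphi_nonneg (t + μ)]
  · intro t μ ht hμ
    have ht1 : (1:ℝ) < t := lt_of_lt_of_le (by
      have := Real.exp_one_gt_d9; linarith) ht
    have ht0 : 0 < t := by linarith
    have hlog : 1 ≤ Real.log t := by
      rw [show (1:ℝ) = Real.log (Real.exp 1) by simp]
      exact Real.log_le_log (Real.exp_pos 1) ht
    have hs0 : 0 ≤ Real.sqrt (2 * Real.log t) := Real.sqrt_nonneg _
    have hsq : Real.sqrt (2 * Real.log t) ^ 2 = 2 * Real.log t := by
      exact Real.sq_sqrt (by linarith)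
    -- bounds on t-μ and t+μ
    have habs := abs_le.mp hμ
    have h1 : Real.sqrt (2 * Real.log t) ≤ t - μ := by linarith [habs.2]
    have h2 : Real.sqrt (2 * Real.log t) ≤ t + μ := by linarith [habs.1]
    have key : ∀ v : ℝ, Real.sqrt (2 * Real.log t) ≤ v →
        gphi v ≤ (Real.sqrt (2 * Real.pi))⁻¹ * t⁻¹ := by
      intro v hv
      unfold gphi
      have hv2 : 2 * Real.log t ≤ v ^ 2 := by
        nlinarith [hsq, hs0]
      have : Real.exp (-v ^ 2 / 2) ≤ Real.exp (- Real.log t) := by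
        apply Real.exp_le_exp.2; linarith
      rw [Real.exp_neg, Real.exp_log ht0] at this
      have hinvnn : (0:ℝ) ≤ (Real.sqrt (2 * Real.pi))⁻¹ := by positivity
      exact mul_le_mul_of_nonneg_left this hinvnn
    have k1 := key _ h1
    have k2 := key _ h2
    have hs := sqrt_two_pi_ge_two
    have hinv : (Real.sqrt (2 * Real.pi))⁻¹ ≤ 1/2 := by
      rw [inv_le_comm₀ (by linarith) (by norm_num)]
      simpa using hs
    have htinv : t * t⁻¹ = 1 := mul_inv_cancel₀ (ne_of_gt ht0)
    have htail : PhiBar (t - μ) + Phi (-t - μ) ≤ 1 := tails_le_one (by linarith)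
    unfold xi
    have hmain : t * (gphi (t - μ) + gphi (t + μ)) ≤ 1 := by
      have : t * (gphi (t - μ) + gphi (t + μ))
          ≤ t * (2 * ((Real.sqrt (2 * Real.pi))⁻¹ * t⁻¹)) := by
        apply mul_le_mul_of_nonneg_left (by linarith) (le_of_lt ht0)
      calc t * (gphi (t - μ) + gphi (t + μ))
          ≤ t * (2 * ((Real.sqrt (2 * Real.pi))⁻¹ * t⁻¹)) := this
        _ = 2 * (Real.sqrt (2 * Real.pi))⁻¹ * (t * t⁻¹) := by ring
        _ = 2 * (Real.sqrt (2 * Real.pi))⁻¹ := by rw [htinv]; ring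
        _ ≤ 1 := by linarith
    linarith
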